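/- In C^{⊗3} one has (−Δ_2 ⊗ 1 + 1 ⊗ Δ_2)(v_1 ⊗ P + P ⊗ v_n) = Σ_{0<i_1<i_2<n} v_1 ⊗ e_{i_1} ⊗ e_{i_2} − Σ_{0<i_1<i_2<n} e_{i_1} ⊗ e_{i_2} ⊗ v_n; in particular this expression generates every extreme term and only extreme terms. -/
import Mathlib


noncomputable section

/-- Cells of an `n`-gon: `v i` models the vertex `v_{i+1}`, `e i` models the edge `e_{i+1}`
(so indices are 0-based), and `F` models the 2-cell `P`. -/
inductive Cell (n : ℕ) : Type where
  | v : Fin n → Cell n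
  | e : Fin n → Cell n
  | F : Cell n
deriving DecidableEq

/-- `Tens R n k` models `C^{⊗ k}`, the free `R`-module on `k`-tuples of cells. -/
abbrev Tens (R : Type) [CommRing R] (n k : ℕ) : Type := (Fin k → Cell n) →₀ R

/-- The basis tensor corresponding to a tuple of cells. -/
def bt (R : Type) [CommRing R] {n k : ℕ} (x : Fin k → Cell n) : Tens R n k :=
  Finsupp.single x 1

/-- Degree of a cell. -/
def degC {n : ℕ} : Cell n → ℕ
  | .v _ => 0
  | .e _ => 1
  | .F => 2

/-- `(-1)^m` in `R`. -/
def sgn (R : Type) [CommRing R] (m : ℤ) : R := if Even m then 1 else -1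

/-- The boundary operator on basis cells: `∂(v_i) = 0`, `∂(e_i) = v_{i+1} - v_i` for `i < n`,
`∂(e_n) = v_n - v_1`, `∂(P) = e_1 + ⋯ + e_{n-1} - e_n`. -/
def dB (R : Type) [CommRing R] (n : ℕ) : Cell n → Tens R n 1
  | .v _ => 0
  | .e i =>
      if h : (i : ℕ) + 1 < n then
        bt R (fun _ => Cell.v ⟨(i : ℕ) + 1, h⟩) - bt R (fun _ => Cell.v i)
      else
        bt R (fun _ => Cell.v i) - bt R (fun _ => Cell.v ⟨0, i.pos⟩)
  | .F => ∑ i : Fin n, (if (i : ℕ) + 1 < n then (1 : R) else -1) • bt R (fun _ => Cell.e i)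

/-- `Σ_{0<i_1<⋯<i_k<n} e_{i_1} ⊗ ⋯ ⊗ e_{i_k}` (with 0-based indices: strictly increasing
tuples of edge indices all `< n-1`). -/
def esum (R : Type) [CommRing R] (n k : ℕ) : Tens R n k :=
  ∑ f : Fin k → Fin n,
    if (∀ p q : Fin k, p < q → f p < f q) ∧ (∀ p : Fin k, ((f p) : ℕ) + 1 < n) then
      bt R (fun p => Cell.e (f p))
    else 0

/-- The `A_∞`-coalgebra operations on basis cells: `DeltaB R n 2` is the Kravatz diagonal
`Δ₂` and for `k ≥ 3`, `DeltaB R n k` is `Δ_k`, which vanishes on vertices and edges and sends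
`P` to `Σ_{0<i_1<⋯<i_k<n} e_{i_1} ⊗ ⋯ ⊗ e_{i_k}`. -/
def DeltaB (R : Type) [CommRing R] (n : ℕ) (k : ℕ) : Cell n → Tens R n k
  | .v i => if k = 2 then bt R (fun _ => Cell.v i) else 0
  | .e i =>
      if k = 2 then
        if h : (i : ℕ) + 1 < n then
          bt R (fun p => if (p : ℕ) = 0 then Cell.v i else Cell.e i) +
            bt R (fun p => if (p : ℕ) = 0 then Cell.e i else Cell.v ⟨(i : ℕ) + 1, h⟩)
        else
          bt R (fun p => if (p : ℕ) = 0 then Cell.v ⟨0, i.pos⟩ else Cell.e i) +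
            bt R (fun p => if (p : ℕ) = 0 then Cell.e i else Cell.v i)
      else 0
  | .F =>
      esum R n k +
        (if h : k = 2 ∧ 0 < n then
          bt R (fun p => if (p : ℕ) = 0 then Cell.v ⟨0, h.2⟩ else Cell.F) +
            bt R (fun p => if (p : ℕ) = 0 then Cell.F
                  else Cell.v ⟨n - 1, Nat.sub_lt h.2 Nat.one_pos⟩)
        else 0)

/-- Extension of a map defined on basis tensors to a linear map. -/
def lext (R : Type) [CommRing R] (n : ℕ) {k m : ℕ} (φ : (Fin k → Cell n) → Tens R n m) :
    Tens R n k →ₗ[R] Tens R n m :=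
  Finsupp.linearCombination R φ

/-- Splicing a `j`-tuple into a `k`-tuple at position `a`, producing an `m`-tuple
(meaningful when `m = k + j - 1` and `a < k`). -/
def splice {n k j : ℕ} (m a : ℕ) (x : Fin k → Cell n) (y : Fin j → Cell n) :
    Fin m → Cell n := fun q =>
  if h1 : (q : ℕ) < a ∧ (q : ℕ) < k then x ⟨q, h1.2⟩
  else if h2 : a ≤ (q : ℕ) ∧ (q : ℕ) - a < j then y ⟨(q : ℕ) - a, h2.2⟩
  else if h3 : (q : ℕ) + 1 - j < k then x ⟨(q : ℕ) + 1 - j, h3⟩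
  else Cell.F

/-- `opp R n k m j a p g` is the linear map `1^{⊗a} ⊗ g ⊗ 1^{⊗(k-1-a)} : C^{⊗k} → C^{⊗m}`
(meaningful when `m = k + j - 1`), where `g` is the basis-level description of an operation
`C → C^{⊗j}` of degree `p`, evaluated with the Koszul sign convention. -/
def opp (R : Type) [CommRing R] (n : ℕ) (k m j a : ℕ) (p : ℤ) (g : Cell n → Tens R n j) :
    Tens R n k →ₗ[R] Tens R n m :=
  lext R n fun x =>
    if ha : a < k then
      sgn R (p * ∑ q : Fin k, if (q : ℕ) < a then (degC (x q) : ℤ) else 0) •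
        Finsupp.mapDomain (splice m a x) (g (x ⟨a, ha⟩))
    else 0

/-- `Δ_k` as a linear map `C → C^{⊗k}`. -/
def Dmap (R : Type) [CommRing R] (n k : ℕ) : Tens R n 1 →ₗ[R] Tens R n k :=
  lext R n fun x => DeltaB R n k (x 0)

/-- The boundary `∂` as a linear map `C → C`. -/
def bdry (R : Type) [CommRing R] (n : ℕ) : Tens R n 1 →ₗ[R] Tens R n 1 :=
  lext R n fun x => dB R n (x 0)

/-- The top cell `P` as a chain. -/
def cellP (R : Type) [CommRing R] (n : ℕ) : Tens R n 1 := bt R (fun _ => Cell.F)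

end


section MyAux

variable {R : Type} [CommRing R] {n : ℕ}

theorem my_lext_bt {k m : ℕ} (φ : (Fin k → Cell n) → Tens R n m) (x : Fin k → Cell n) :
    lext R n φ (bt R x) = φ x := by
  simp [lext, bt]

theorem my_mapDomain_bt {k j : ℕ} (f : (Fin k → Cell n) → (Fin j → Cell n))
    (x : Fin k → Cell n) : Finsupp.mapDomain f (bt R x) = bt R (f x) :=
  Finsupp.mapDomain_single

theorem my_opp_bt (k m j a : ℕ) (p : ℤ) (g : Cell n → Tens R n j) (x : Fin k → Cell n)
    (ha : a < k) :
    opp R n k m j a p g (bt R x) =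
      sgn R (p * ∑ q : Fin k, if (q : ℕ) < a then (degC (x q) : ℤ) else 0) •
        Finsupp.mapDomain (splice m a x) (g (x ⟨a, ha⟩)) := by
  rw [opp, my_lext_bt, dif_pos ha]

theorem my_sgn_zero : sgn R 0 = 1 := by simp [sgn]

theorem my_splice30 (x y : Fin 2 → Cell n) :
    splice 3 0 x y = fun q : Fin 3 =>
      if (q : ℕ) = 0 then y 0 else if (q : ℕ) = 1 then y 1 else x 1 := by
  funext q; fin_cases q <;> simp [splice]

theorem my_splice31 (x y : Fin 2 → Cell n) :
    splice 3 1 x y = fun q : Fin 3 =>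
      if (q : ℕ) = 0 then x 0 else if (q : ℕ) = 1 then y 0 else y 1 := by
  funext q; fin_cases q <;> simp [splice]

theorem my_mapDomain_ite {k j : ℕ} (f : (Fin k → Cell n) → (Fin j → Cell n))
    (c : Prop) [Decidable c] (x : Fin k → Cell n) :
    Finsupp.mapDomain f (if c then bt R x else 0) = if c then bt R (f x) else 0 := by
  split <;> simp [my_mapDomain_bt]

theorem my_sum_pair (A : Fin n → Fin n → Tens R n 3) :
    (∑ f : Fin 2 → Fin n,
      if (∀ p q : Fin 2, p < q → f p < f q) ∧ (∀ p : Fin 2, ((f p) : ℕ) + 1 < n) then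
        A (f 0) (f 1) else 0) =
    ∑ i1 : Fin n, ∑ i2 : Fin n, if i1 < i2 ∧ (i2 : ℕ) + 1 < n then A i1 i2 else 0 := by
  refine (Fintype.sum_equiv (piFinTwoEquiv fun _ => Fin n) _
    (fun p : Fin n × Fin n => if p.1 < p.2 ∧ ((p.2 : ℕ)) + 1 < n then A p.1 p.2 else 0)
    fun f => ?_).trans (Fintype.sum_prod_type _)
  simp only [piFinTwoEquiv_apply]
  congr 1
  rw [eq_iff_iff]
  constructor
  · rintro ⟨h1, h2⟩; exact ⟨h1 0 1 (by decide), h2 1⟩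
  · rintro ⟨h1, h2⟩
    refine ⟨fun p q hpq => ?_, fun p => ?_⟩
    · fin_cases p <;> fin_cases q <;> first | exact h1 | exact absurd hpq (by decide)
    · fin_cases p
      · show ((f 0 : Fin n) : ℕ) + 1 < n
        have := Fin.lt_def.mp h1; omega
      · exact h2

end MyAux

/-- In `C^{⊗3}`:
`(−Δ₂⊗1 + 1⊗Δ₂)(v₁ ⊗ P + P ⊗ v_n)
  = Σ_{0<i₁<i₂<n} v₁ ⊗ e_{i₁} ⊗ e_{i₂} − Σ_{0<i₁<i₂<n} e_{i₁} ⊗ e_{i₂} ⊗ v_n`;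
this expression generates every extreme term and only extreme terms. -/
theorem primitive_terms_give_extreme (R : Type) [CommRing R] (n : ℕ) (hn : 3 ≤ n) :
    (-(opp R n 2 3 2 0 0 (DeltaB R n 2)) + opp R n 2 3 2 1 0 (DeltaB R n 2))
        (bt R (fun p : Fin 2 => if (p : ℕ) = 0 then Cell.v ⟨0, by omega⟩ else Cell.F) +
          bt R (fun p : Fin 2 => if (p : ℕ) = 0 then Cell.F else Cell.v ⟨n - 1, by omega⟩)) =
      ∑ i1 : Fin n, ∑ i2 : Fin n,
        if i1 < i2 ∧ (i2 : ℕ) + 1 < n then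
          bt R (fun q : Fin 3 =>
            if (q : ℕ) = 0 then Cell.v ⟨0, by omega⟩
            else if (q : ℕ) = 1 then Cell.e i1 else Cell.e i2) -
          bt R (fun q : Fin 3 =>
            if (q : ℕ) = 0 then Cell.e i1
            else if (q : ℕ) = 1 then Cell.e i2 else Cell.v ⟨n - 1, by omega⟩)
        else 0 := by
  have h0 : 0 < n := by omega
  simp only [map_add, LinearMap.add_apply, LinearMap.neg_apply]
  rw [my_opp_bt _ _ _ 0 _ _ _ (by omega), my_opp_bt _ _ _ 0 _ _ _ (by omega),
      my_opp_bt _ _ _ 1 _ _ _ (by omega), my_opp_bt _ _ _ 1 _ _ _ (by omega)]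
  simp only [zero_mul, my_sgn_zero, one_smul, if_true, one_ne_zero, if_false]
  have hF : DeltaB R n 2 (Cell.F : Cell n) = esum R n 2 +
      (bt R (fun p : Fin 2 => if (p : ℕ) = 0 then Cell.v ⟨0, h0⟩ else Cell.F) +
        bt R (fun p : Fin 2 => if (p : ℕ) = 0 then Cell.F
          else Cell.v ⟨n - 1, Nat.sub_lt h0 Nat.one_pos⟩)) := by
    rw [DeltaB, dif_pos ⟨rfl, h0⟩]
  have hv : ∀ i : Fin n, DeltaB R n 2 (Cell.v i : Cell n) = bt R (fun _ => Cell.v i) :=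
    fun i => by rw [DeltaB, if_pos rfl]
  rw [hF, hv, hv]
  simp only [esum, Finsupp.mapDomain_add, Finsupp.mapDomain_finset_sum, my_mapDomain_ite,
    my_mapDomain_bt, my_splice30, my_splice31]
  simp only [Fin.val_zero, Fin.val_one, if_true, one_ne_zero, if_false]
  have hsplit : ∀ (c : Prop) [Decidable c] (a b : Tens R n 3),
      (if c then a - b else 0) = (if c then a else 0) - (if c then b else 0) := by
    intro c _ a b; split <;> simp
  simp only [hsplit, Finset.sum_sub_distrib]
  rw [← my_sum_pair, ← my_sum_pair]
  beta_reduce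
  abel
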